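/- arXiv:0709.0139 — 4 statements merged into one kernel-verified Lean document; each statement's English description precedes it below -/
import Mathlib

section
/- For 0 < δ < 1/2, the improper integral ∫_0^∞ sin²(πu)/u^{2δ+2} du converges and (2/π²)∫_0^∞ sin²(πu) u^{-(2δ+2)} du = -Γ(-1-2δ) cos(π(1/2+δ)) 2^{2δ+1} π^{2δ-1}. -/
open Real MeasureTheory Set
open Filter

lemma integrableOn_exp_mul_cos (a : ℝ) {t : ℝ} (ht : 0 < t) :
    IntegrableOn (fun u : ℝ => exp (-t * u) * cos (a * u)) (Ioi 0) := by
  refine (exp_neg_integrableOn_Ioi 0 ht).mono' ?_ ?_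
  · exact (Continuous.mul (by fun_prop) (by fun_prop)).aestronglyMeasurable
  · filter_upwards with u
    rw [norm_mul, norm_eq_abs (exp _), abs_exp]
    calc rexp (-t * u) * ‖cos (a * u)‖ ≤ rexp (-t * u) * 1 := by
          gcongr
          exact abs_cos_le_one _
      _ = rexp (-t * u) := mul_one _

lemma laplace_cos (a : ℝ) {t : ℝ} (ht : 0 < t) :
    ∫ u in Ioi (0:ℝ), exp (-t * u) * cos (a * u) = t / (t ^ 2 + a ^ 2) := by
  have hD : (0:ℝ) < t ^ 2 + a ^ 2 := by positivity
  set F : ℝ → ℝ := fun u => exp (-t * u) * (a * sin (a * u) - t * cos (a * u)) / (t ^ 2 + a ^ 2)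
    with hF
  have hderiv : ∀ u : ℝ, HasDerivAt F (exp (-t * u) * cos (a * u)) u := by
    intro u
    have h1 : HasDerivAt (fun u : ℝ => exp (-t * u)) (exp (-t * u) * (-t)) u := by
      simpa using ((hasDerivAt_id u).const_mul (-t)).exp
    have h2 : HasDerivAt (fun u : ℝ => sin (a * u)) (cos (a * u) * a) u := by
      simpa using ((hasDerivAt_id u).const_mul a).sin
    have h3 : HasDerivAt (fun u : ℝ => cos (a * u)) (-sin (a * u) * a) u := by
      simpa using ((hasDerivAt_id u).const_mul a).cos
    have := ((h1.mul ((h2.const_mul a).sub (h3.const_mul t)))).div_const (t ^ 2 + a ^ 2)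
    refine this.congr_deriv ?_
    simp only [Pi.sub_apply]
    rw [div_eq_iff hD.ne']
    ring
  have htend : Tendsto F atTop (nhds 0) := by
    have hexp : Tendsto (fun u : ℝ => exp (-t * u) * ((|a| + |t|) / (t ^ 2 + a ^ 2))) atTop
        (nhds 0) := by
      rw [show (0:ℝ) = 0 * ((|a| + |t|) / (t ^ 2 + a ^ 2)) by ring]
      refine Tendsto.mul_const _ ?_
      exact (tendsto_exp_atBot.comp (tendsto_id.const_mul_atTop_of_neg (by linarith)))
    refine squeeze_zero_norm (fun u => ?_) hexp
    rw [hF]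
    rw [norm_div, norm_mul, norm_eq_abs (exp _), abs_exp, norm_eq_abs (t ^ 2 + a ^ 2),
      abs_of_pos hD, mul_div_assoc]
    gcongr
    calc ‖a * sin (a * u) - t * cos (a * u)‖ ≤ ‖a * sin (a * u)‖ + ‖t * cos (a * u)‖ :=
        norm_sub_le _ _
      _ ≤ |a| * 1 + |t| * 1 := by
          rw [norm_mul, norm_mul]
          simp only [Real.norm_eq_abs]
          gcongr
          · exact abs_sin_le_one _
          · exact abs_cos_le_one _
      _ = |a| + |t| := by ring
  have h0 : ContinuousWithinAt F (Ici 0) 0 :=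
    ((Continuous.mul (by fun_prop) (by fun_prop)).div_const _).continuousWithinAt
  have := integral_Ioi_of_hasDerivAt_of_tendsto h0 (fun x _ => hderiv x)
    (integrableOn_exp_mul_cos a ht) htend
  rw [this, hF]
  simp
  field_simp

lemma integral_exp_neg_mul_Ioi {b : ℝ} (hb : 0 < b) :
    ∫ x in Ioi (0:ℝ), exp (-b * x) = 1 / b := by
  have := laplace_cos 0 hb
  simp only [zero_mul, cos_zero, mul_one] at this
  rw [this]
  rw [show b ^ 2 + 0 ^ 2 = b * b by ring]
  rw [eq_div_iff hb.ne']
  field_simp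

lemma integrableOn_exp_mul_sin_sq {t : ℝ} (ht : 0 < t) :
    IntegrableOn (fun u : ℝ => exp (-t * u) * sin (π * u) ^ 2) (Ioi 0) := by
  refine (exp_neg_integrableOn_Ioi 0 ht).mono' ?_ ?_
  · exact (Continuous.mul (by fun_prop) (by fun_prop)).aestronglyMeasurable
  · filter_upwards with u
    rw [norm_mul, norm_eq_abs (exp _), abs_exp]
    calc rexp (-t * u) * ‖sin (π * u) ^ 2‖ ≤ rexp (-t * u) * 1 := by
          gcongr
          rw [norm_pow, ← one_pow 2]
          gcongr
          exact abs_sin_le_one _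
      _ = rexp (-t * u) := mul_one _

lemma laplace_sin_sq {t : ℝ} (ht : 0 < t) :
    ∫ u in Ioi (0:ℝ), exp (-t * u) * sin (π * u) ^ 2
      = 2 * π ^ 2 / (t * (t ^ 2 + 4 * π ^ 2)) := by
  have h1 : ∀ u : ℝ, exp (-t * u) * sin (π * u) ^ 2
      = (1/2) * exp (-t * u) - (1/2) * (exp (-t * u) * cos (2 * π * u)) := by
    intro u
    rw [Real.sin_sq (π * u), Real.cos_sq (π * u), show 2 * π * u = 2 * (π * u) by ring]
    ring
  simp_rw [h1]
  rw [integral_sub (((exp_neg_integrableOn_Ioi 0 ht)).const_mul _)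
    ((integrableOn_exp_mul_cos (2 * π) ht).const_mul _),
    integral_const_mul, integral_const_mul, integral_exp_neg_mul_Ioi ht, laplace_cos (2 * π) ht]
  have h2 : (0:ℝ) < t ^ 2 + 4 * π ^ 2 := by positivity
  have h3 : t ^ 2 + (2 * π) ^ 2 = t ^ 2 + 4 * π ^ 2 := by ring
  rw [h3]
  field_simp
  ring

lemma integrable_main {δ : ℝ} (hδ0 : 0 < δ) (hδ : δ < 1/2) :
    IntegrableOn (fun u : ℝ => sin (π * u) ^ 2 / u ^ (2 * δ + 2)) (Ioi 0) := by
  have hm : Measurable fun u : ℝ => sin (π * u) ^ 2 / u ^ (2 * δ + 2) := by fun_prop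
  have h1 : IntegrableOn (fun u : ℝ => sin (π * u) ^ 2 / u ^ (2 * δ + 2)) (Ioc 0 1) := by
    have hb : IntegrableOn (fun u : ℝ => π ^ 2 * u ^ (-(2 * δ))) (Ioc 0 1) := by
      exact ((intervalIntegrable_iff_integrableOn_Ioc_of_le zero_le_one).mp
        (intervalIntegral.intervalIntegrable_rpow' (by linarith))).const_mul _
    refine hb.mono' hm.aestronglyMeasurable ?_
    filter_upwards [ae_restrict_mem measurableSet_Ioc] with u hu
    obtain ⟨hu0, hu1⟩ := hu
    rw [norm_div, norm_pow, norm_eq_abs, norm_eq_abs, abs_of_pos (rpow_pos_of_pos hu0 _)]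
    rw [div_le_iff₀ (rpow_pos_of_pos hu0 _)]
    calc |sin (π * u)| ^ 2 ≤ |π * u| ^ 2 :=
          pow_le_pow_left₀ (abs_nonneg _) abs_sin_le_abs 2
      _ = π ^ 2 * u ^ (2:ℝ) := by
          rw [abs_mul, abs_of_pos pi_pos, abs_of_pos hu0, mul_pow, rpow_two]
      _ = π ^ 2 * (u ^ (-(2 * δ)) * u ^ (2 * δ + 2)) := by
          rw [← rpow_add hu0]
          norm_num
      _ = π ^ 2 * u ^ (-(2 * δ)) * u ^ (2 * δ + 2) := by ring
  have h2 : IntegrableOn (fun u : ℝ => sin (π * u) ^ 2 / u ^ (2 * δ + 2)) (Ioi 1) := by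
    have hb : IntegrableOn (fun u : ℝ => u ^ (-(2 * δ + 2))) (Ioi 1) :=
      integrableOn_Ioi_rpow_of_lt (by linarith) one_pos
    refine hb.mono' hm.aestronglyMeasurable ?_
    filter_upwards [ae_restrict_mem measurableSet_Ioi] with u hu
    have hu0 : (0:ℝ) < u := lt_trans one_pos hu
    rw [norm_div, norm_pow, norm_eq_abs, norm_eq_abs, abs_of_pos (rpow_pos_of_pos hu0 _),
      rpow_neg hu0.le, div_le_iff₀ (rpow_pos_of_pos hu0 _), inv_mul_cancel₀
        (rpow_pos_of_pos hu0 _).ne']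
    calc |sin (π * u)| ^ 2 ≤ 1 ^ 2 := by gcongr; exact abs_sin_le_one _
      _ = 1 := one_pow 2
  have := h1.union h2
  rwa [Ioc_union_Ioi_eq_Ioi zero_le_one] at this

lemma integrable_K {δ : ℝ} (hδ0 : 0 < δ) (hδ : δ < 1/2) :
    IntegrableOn (fun t : ℝ => t ^ (2 * δ) / (t ^ 2 + 4 * π ^ 2)) (Ioi 0) := by
  have hm : Measurable fun t : ℝ => t ^ (2 * δ) / (t ^ 2 + 4 * π ^ 2) := by fun_prop
  have h1 : IntegrableOn (fun t : ℝ => t ^ (2 * δ) / (t ^ 2 + 4 * π ^ 2)) (Ioc 0 1) := by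
    have hb : IntegrableOn (fun t : ℝ => (4 * π ^ 2)⁻¹ * t ^ (2 * δ)) (Ioc 0 1) := by
      exact ((intervalIntegrable_iff_integrableOn_Ioc_of_le zero_le_one).mp
        (intervalIntegral.intervalIntegrable_rpow' (by linarith))).const_mul _
    refine hb.mono' hm.aestronglyMeasurable ?_
    filter_upwards [ae_restrict_mem measurableSet_Ioc] with t ht
    obtain ⟨ht0, _⟩ := ht
    have hD : (0:ℝ) < t ^ 2 + 4 * π ^ 2 := by positivity
    rw [norm_div, norm_eq_abs, norm_eq_abs, abs_of_pos (rpow_pos_of_pos ht0 _), abs_of_pos hD,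
      div_le_iff₀ hD]
    have h4 : (4 * π ^ 2)⁻¹ * (4 * π ^ 2) = 1 := inv_mul_cancel₀ (by positivity)
    nlinarith [mul_nonneg (mul_nonneg (inv_nonneg.mpr (by positivity : (0:ℝ) ≤ 4 * π ^ 2))
      (rpow_pos_of_pos ht0 (2 * δ)).le) (sq_nonneg t), h4, (rpow_pos_of_pos ht0 (2 * δ)).le]
  have h2 : IntegrableOn (fun t : ℝ => t ^ (2 * δ) / (t ^ 2 + 4 * π ^ 2)) (Ioi 1) := by
    have hb : IntegrableOn (fun t : ℝ => t ^ (2 * δ - 2)) (Ioi 1) :=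
      integrableOn_Ioi_rpow_of_lt (by linarith) one_pos
    refine hb.mono' hm.aestronglyMeasurable ?_
    filter_upwards [ae_restrict_mem measurableSet_Ioi] with t ht
    have ht0 : (0:ℝ) < t := lt_trans one_pos ht
    have hD : (0:ℝ) < t ^ 2 + 4 * π ^ 2 := by positivity
    rw [norm_div, norm_eq_abs, norm_eq_abs, abs_of_pos (rpow_pos_of_pos ht0 _), abs_of_pos hD,
      div_le_iff₀ hD]
    calc t ^ (2 * δ) = t ^ (2 * δ - 2) * t ^ (2:ℝ) := by
          rw [← rpow_add ht0]; norm_num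
      _ ≤ t ^ (2 * δ - 2) * (t ^ 2 + 4 * π ^ 2) := by
          refine mul_le_mul_of_nonneg_left ?_ (rpow_pos_of_pos ht0 _).le
          rw [rpow_two]
          exact le_add_of_nonneg_right (by positivity)
  have := h1.union h2
  rwa [Ioc_union_Ioi_eq_Ioi zero_le_one] at this

lemma integral_rpow_mul_exp_neg_mul {q b : ℝ} (hq : -1 < q) (hb : 0 < b) :
    ∫ x in Ioi (0:ℝ), x ^ q * exp (-b * x) = b ^ (-(q + 1)) * Gamma (q + 1) := by
  have h := integral_rpow_mul_exp_neg_mul_rpow one_pos hq hb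
  simp_rw [rpow_one] at h
  rw [h]
  norm_num

lemma integrableOn_rpow_mul_exp_neg_mul {q b : ℝ} (hq : -1 < q) (hb : 0 < b) :
    IntegrableOn (fun x : ℝ => x ^ q * exp (-b * x)) (Ioi 0) := by
  have h := integrableOn_rpow_mul_exp_neg_mul_rpow hq one_pos hb
  simpa only [rpow_one] using h

/-- Step 1 -/
lemma step1 {δ : ℝ} (hδ0 : 0 < δ) (hδ : δ < 1/2) :
    Gamma (2 * δ + 2) * ∫ u in Ioi (0:ℝ), sin (π * u) ^ 2 / u ^ (2 * δ + 2)
      = 2 * π ^ 2 * ∫ t in Ioi (0:ℝ), t ^ (2 * δ) / (t ^ 2 + 4 * π ^ 2) := by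
  obtain ⟨s, hs⟩ : ∃ s : ℝ, s = 2 * δ + 1 := ⟨_, rfl⟩
  have hs1 : -1 < s := by rw [hs]; linarith
  have hs2 : s + 1 = 2 * δ + 2 := by rw [hs]; ring
  have hinner : ∀ u : ℝ, u ∈ Ioi (0:ℝ) →
      ∫ t in Ioi (0:ℝ), sin (π * u) ^ 2 * (t ^ s * exp (-u * t))
        = Gamma (2 * δ + 2) * (sin (π * u) ^ 2 / u ^ (2 * δ + 2)) := by
    intro u hu
    rw [integral_const_mul, integral_rpow_mul_exp_neg_mul hs1 hu, hs2,
      rpow_neg (le_of_lt hu), div_eq_mul_inv]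
    ring
  have hinner' : ∀ t : ℝ, t ∈ Ioi (0:ℝ) →
      ∫ u in Ioi (0:ℝ), sin (π * u) ^ 2 * (t ^ s * exp (-u * t))
        = 2 * π ^ 2 * (t ^ (2 * δ) / (t ^ 2 + 4 * π ^ 2)) := by
    intro t ht
    have h1 : ∀ u : ℝ, sin (π * u) ^ 2 * (t ^ s * exp (-u * t))
        = t ^ s * (exp (-t * u) * sin (π * u) ^ 2) := by
      intro u; rw [show -u * t = -t * u by ring]; ring
    simp_rw [h1]
    rw [integral_const_mul, laplace_sin_sq ht]
    have hts : t ^ s = t ^ (2 * δ) * t := by rw [hs, rpow_add ht, rpow_one]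
    have hD : (0:ℝ) < t ^ 2 + 4 * π ^ 2 := by positivity
    have ht' : (0:ℝ) < t := ht
    rw [hts]
    field_simp
  have hint : Integrable
      (Function.uncurry fun u t : ℝ => sin (π * u) ^ 2 * (t ^ s * exp (-u * t)))
      ((volume.restrict (Ioi 0)).prod (volume.restrict (Ioi 0))) := by
    rw [integrable_prod_iff (Measurable.aestronglyMeasurable (by fun_prop))]
    constructor
    · simp only [Function.uncurry_apply_pair]
      filter_upwards [ae_restrict_mem measurableSet_Ioi] with u hu
      exact ((integrableOn_rpow_mul_exp_neg_mul hs1 hu).const_mul _)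
    · simp only [Function.uncurry_apply_pair]
      have hcong : ∀ᵐ u ∂(volume.restrict (Ioi (0:ℝ))),
          (∫ t in Ioi (0:ℝ), ‖sin (π * u) ^ 2 * (t ^ s * exp (-u * t))‖)
            = Gamma (2 * δ + 2) * (sin (π * u) ^ 2 / u ^ (2 * δ + 2)) := by
        filter_upwards [ae_restrict_mem measurableSet_Ioi] with u hu
        have hn : ∀ᵐ t ∂(volume.restrict (Ioi (0:ℝ))),
            ‖sin (π * u) ^ 2 * (t ^ s * exp (-u * t))‖
              = sin (π * u) ^ 2 * (t ^ s * exp (-u * t)) := by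
          filter_upwards [ae_restrict_mem measurableSet_Ioi] with t ht
          have ht' : (0:ℝ) < t := ht
          rw [norm_eq_abs, abs_of_nonneg (mul_nonneg (sq_nonneg _)
            (mul_nonneg (rpow_pos_of_pos ht' s).le (exp_pos _).le))]
        rw [integral_congr_ae hn, hinner u hu]
      refine Integrable.congr ?_ (hcong.mono fun u h => h.symm)
      exact ((integrable_main hδ0 hδ).const_mul _)
  have hswap := MeasureTheory.integral_integral_swap hint
  calc Gamma (2 * δ + 2) * ∫ u in Ioi (0:ℝ), sin (π * u) ^ 2 / u ^ (2 * δ + 2)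
      = ∫ u in Ioi (0:ℝ), ∫ t in Ioi (0:ℝ),
          sin (π * u) ^ 2 * (t ^ s * exp (-u * t)) := by
        rw [← integral_const_mul]
        exact (setIntegral_congr_fun measurableSet_Ioi hinner).symm
    _ = ∫ t in Ioi (0:ℝ), ∫ u in Ioi (0:ℝ),
          sin (π * u) ^ 2 * (t ^ s * exp (-u * t)) := hswap
    _ = 2 * π ^ 2 * ∫ t in Ioi (0:ℝ), t ^ (2 * δ) / (t ^ 2 + 4 * π ^ 2) := by
        rw [← integral_const_mul]
        exact setIntegral_congr_fun measurableSet_Ioi hinner'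

/-- Step 2 -/
lemma step2 {δ : ℝ} (hδ0 : 0 < δ) (hδ : δ < 1/2) :
    ∫ t in Ioi (0:ℝ), t ^ (2 * δ) / (t ^ 2 + 4 * π ^ 2)
      = 1 / 2 * Gamma (δ + 1/2) * Gamma (1/2 - δ) * (4 * π ^ 2) ^ (δ - 1/2) := by
  have hq : (-1:ℝ) < 2 * δ := by linarith
  have hinner : ∀ t : ℝ, t ∈ Ioi (0:ℝ) →
      ∫ x in Ioi (0:ℝ), t ^ (2 * δ) * (exp (-x * t ^ (2:ℝ)) * exp (-(4 * π ^ 2) * x))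
        = t ^ (2 * δ) / (t ^ 2 + 4 * π ^ 2) := by
    intro t ht
    have ht' : (0:ℝ) < t := ht
    have hD : (0:ℝ) < t ^ 2 + 4 * π ^ 2 := by positivity
    have h1 : ∀ x : ℝ, exp (-x * t ^ (2:ℝ)) * exp (-(4 * π ^ 2) * x)
        = exp (-(t ^ 2 + 4 * π ^ 2) * x) := by
      intro x
      rw [← exp_add, rpow_two]
      ring_nf
    simp_rw [h1]
    rw [integral_const_mul, integral_exp_neg_mul_Ioi hD]
    rw [mul_one_div]
  have hinner' : ∀ x : ℝ, x ∈ Ioi (0:ℝ) →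
      ∫ t in Ioi (0:ℝ), t ^ (2 * δ) * (exp (-x * t ^ (2:ℝ)) * exp (-(4 * π ^ 2) * x))
        = exp (-(4 * π ^ 2) * x) * (x ^ (-(δ + 1/2)) * (1/2) * Gamma (δ + 1/2)) := by
    intro x hx
    have hx' : (0:ℝ) < x := hx
    have h1 : ∀ t : ℝ, t ^ (2 * δ) * (exp (-x * t ^ (2:ℝ)) * exp (-(4 * π ^ 2) * x))
        = exp (-(4 * π ^ 2) * x) * (t ^ (2 * δ) * exp (-x * t ^ (2:ℝ))) := by
      intro t; ring
    simp_rw [h1]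
    rw [integral_const_mul, integral_rpow_mul_exp_neg_mul_rpow two_pos hq hx']
    norm_num
    rw [show ((-1 + -(2 * δ)) / 2 : ℝ) = -(1/2) + -δ by ring,
      show ((2 * δ + 1) / 2 : ℝ) = δ + 1/2 by ring]
  have hint : Integrable
      (Function.uncurry fun t x : ℝ =>
        t ^ (2 * δ) * (exp (-x * t ^ (2:ℝ)) * exp (-(4 * π ^ 2) * x)))
      ((volume.restrict (Ioi 0)).prod (volume.restrict (Ioi 0))) := by
    rw [integrable_prod_iff (Measurable.aestronglyMeasurable (by fun_prop))]
    constructor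
    · simp only [Function.uncurry_apply_pair]
      filter_upwards [ae_restrict_mem measurableSet_Ioi] with t ht
      have ht' : (0:ℝ) < t := ht
      have h1 : ∀ x : ℝ, t ^ (2 * δ) * (exp (-x * t ^ (2:ℝ)) * exp (-(4 * π ^ 2) * x))
          = t ^ (2 * δ) * exp (-(t ^ 2 + 4 * π ^ 2) * x) := by
        intro x
        rw [← exp_add, rpow_two]
        ring_nf
      simp_rw [h1]
      exact (exp_neg_integrableOn_Ioi 0 (by positivity)).const_mul _
    · simp only [Function.uncurry_apply_pair]
      have hcong : ∀ᵐ t ∂(volume.restrict (Ioi (0:ℝ))),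
          (∫ x in Ioi (0:ℝ), ‖t ^ (2 * δ) * (exp (-x * t ^ (2:ℝ)) * exp (-(4 * π ^ 2) * x))‖)
            = t ^ (2 * δ) / (t ^ 2 + 4 * π ^ 2) := by
        filter_upwards [ae_restrict_mem measurableSet_Ioi] with t ht
        have ht' : (0:ℝ) < t := ht
        have hn : ∀ᵐ x ∂(volume.restrict (Ioi (0:ℝ))),
            ‖t ^ (2 * δ) * (exp (-x * t ^ (2:ℝ)) * exp (-(4 * π ^ 2) * x))‖
              = t ^ (2 * δ) * (exp (-x * t ^ (2:ℝ)) * exp (-(4 * π ^ 2) * x)) := by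
          filter_upwards with x
          rw [norm_eq_abs, abs_of_nonneg (mul_nonneg (rpow_pos_of_pos ht' _).le
            (mul_nonneg (exp_pos _).le (exp_pos _).le))]
        rw [integral_congr_ae hn, hinner t ht]
      refine Integrable.congr ?_ (hcong.mono fun t h => h.symm)
      exact integrable_K hδ0 hδ
  have hswap := MeasureTheory.integral_integral_swap hint
  calc ∫ t in Ioi (0:ℝ), t ^ (2 * δ) / (t ^ 2 + 4 * π ^ 2)
      = ∫ t in Ioi (0:ℝ), ∫ x in Ioi (0:ℝ),
          t ^ (2 * δ) * (exp (-x * t ^ (2:ℝ)) * exp (-(4 * π ^ 2) * x)) :=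
        (setIntegral_congr_fun measurableSet_Ioi hinner).symm
    _ = ∫ x in Ioi (0:ℝ), ∫ t in Ioi (0:ℝ),
          t ^ (2 * δ) * (exp (-x * t ^ (2:ℝ)) * exp (-(4 * π ^ 2) * x)) := hswap
    _ = ∫ x in Ioi (0:ℝ), exp (-(4 * π ^ 2) * x) * (x ^ (-(δ + 1/2)) * (1/2)
          * Gamma (δ + 1/2)) := setIntegral_congr_fun measurableSet_Ioi hinner'
    _ = 1 / 2 * Gamma (δ + 1/2) * Gamma (1/2 - δ) * (4 * π ^ 2) ^ (δ - 1/2) := by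
        have h2 : ∀ x : ℝ, exp (-(4 * π ^ 2) * x) * (x ^ (-(δ + 1/2)) * (1/2)
            * Gamma (δ + 1/2))
            = (1/2 * Gamma (δ + 1/2)) * (x ^ (-(δ + 1/2)) * exp (-(4 * π ^ 2) * x)) := by
          intro x; ring
        simp_rw [h2]
        rw [integral_const_mul, integral_rpow_mul_exp_neg_mul (by linarith) (by positivity)]
        rw [show (-(-(δ + 1/2) + 1) : ℝ) = δ - 1/2 by ring,
          show (-(δ + 1/2) + 1 : ℝ) = 1/2 - δ by ring]
        ring

set_option maxHeartbeats 1000000 in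
theorem periodogram_pole_integral (δ : ℝ) (hδ0 : 0 < δ) (hδ : δ < 1/2) :
    IntegrableOn (fun u : ℝ => Real.sin (π * u) ^ 2 / u ^ (2 * δ + 2)) (Ioi 0) volume ∧
    (2 / π ^ 2) * ∫ u in Ioi (0:ℝ), Real.sin (π * u) ^ 2 / u ^ (2 * δ + 2) =
      -Real.Gamma (-1 - 2 * δ) * Real.cos (π * (1/2 + δ)) * 2 ^ (2 * δ + 1) * π ^ (2 * δ - 1) := by
  refine ⟨integrable_main hδ0 hδ, ?_⟩
  have hΓ2 : 0 < Gamma (2 * δ + 2) := Gamma_pos_of_pos (by linarith)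
  have hθ : 0 < π * (1/2 + δ) := by positivity
  have hθπ : π * (1/2 + δ) < π := by
    nlinarith [pi_pos]
  have hS : 0 < sin (π * (1/2 + δ)) := sin_pos_of_pos_of_lt_pi hθ hθπ
  have hC : cos (π * (1/2 + δ)) < 0 := by
    apply cos_neg_of_pi_div_two_lt_of_lt
    · nlinarith [pi_pos]
    · nlinarith [pi_pos]
  have h1 : Gamma (δ + 1/2) * Gamma (1/2 - δ) = π / sin (π * (1/2 + δ)) := by
    have h := Gamma_mul_Gamma_one_sub (δ + 1/2)
    rw [show (1 - (δ + 1/2) : ℝ) = 1/2 - δ by ring,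
      show (π * (δ + 1/2) : ℝ) = π * (1/2 + δ) by ring] at h
    exact h
  have h2 : Gamma (-1 - 2 * δ) * Gamma (2 * δ + 2)
      = -π / (2 * sin (π * (1/2 + δ)) * cos (π * (1/2 + δ))) := by
    have h := Gamma_mul_Gamma_one_sub (-1 - 2 * δ)
    rw [show (1 - (-1 - 2 * δ) : ℝ) = 2 * δ + 2 by ring] at h
    rw [h]
    have hsin : sin (π * (-1 - 2 * δ))
        = -(2 * sin (π * (1/2 + δ)) * cos (π * (1/2 + δ))) := by
      rw [show (π * (-1 - 2 * δ) : ℝ) = -(2 * (π * (1/2 + δ))) by ring, sin_neg, sin_two_mul]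
    rw [hsin, div_neg, neg_div]
  have hGneg : Gamma (-1 - 2 * δ)
      = -π / (2 * sin (π * (1/2 + δ)) * cos (π * (1/2 + δ)) * Gamma (2 * δ + 2)) := by
    rw [eq_div_iff (by
      exact mul_ne_zero (mul_ne_zero (mul_ne_zero two_ne_zero hS.ne') hC.ne) hΓ2.ne')]
    rw [eq_div_iff (mul_ne_zero (mul_ne_zero two_ne_zero hS.ne') hC.ne)] at h2
    linear_combination h2
  have hpow : (4 * π ^ 2 : ℝ) ^ (δ - 1/2) = 2 ^ (2 * δ - 1) * π ^ (2 * δ - 1) := by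
    rw [show (4 * π ^ 2 : ℝ) = (2 * π) ^ (2:ℕ) by ring, ← rpow_natCast (2 * π) 2,
      ← rpow_mul (by positivity), show ((2:ℕ) : ℝ) * (δ - 1/2) = 2 * δ - 1 by push_cast; ring,
      mul_rpow two_pos.le pi_pos.le]
  have hpow2 : (2:ℝ) ^ (2 * δ + 1) = 2 ^ (2 * δ - 1) * 4 := by
    rw [show (2 * δ + 1 : ℝ) = (2 * δ - 1) + 2 by ring, rpow_add two_pos, rpow_two]
    norm_num
  apply mul_left_cancel₀ hΓ2.ne'
  rw [show Gamma (2 * δ + 2) * ((2 / π ^ 2) * ∫ u in Ioi (0:ℝ), sin (π * u) ^ 2 / u ^ (2 * δ + 2))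
      = (2 / π ^ 2) * (Gamma (2 * δ + 2) * ∫ u in Ioi (0:ℝ), sin (π * u) ^ 2 / u ^ (2 * δ + 2))
      by ring, step1 hδ0 hδ, step2 hδ0 hδ,
    mul_assoc (1/2 : ℝ) (Gamma (δ + 1/2)) (Gamma (1/2 - δ)), h1, hpow, hGneg, hpow2]
  have hπ : (π : ℝ) ≠ 0 := pi_ne_zero
  have final : ∀ S C G A B p : ℝ, S ≠ 0 → C ≠ 0 → G ≠ 0 → p ≠ 0 →
      2 / p ^ 2 * (2 * p ^ 2 * (1 / 2 * (p / S) * (A * B)))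
        = G * (-(-p / (2 * S * C * G)) * C * (A * 4) * B) := by
    intro S C G A B p hS hC hG hp
    field_simp
    ring
  exact final _ _ _ _ _ _ hS.ne' hC.ne hΓ2.ne' hπ
end

section
/- The function B(δ) = -Γ(-1-2δ) cos(π(1/2+δ)) 2^{2δ+1} π^{2δ-1} defined for δ ∈ (0, 1/2) satisfies lim_{δ→0+} B(δ) = 1. -/
open Real Filter Topology

noncomputable def biasConst (δ : ℝ) : ℝ :=
  -Real.Gamma (-1 - 2 * δ) * Real.cos (π * (1/2 + δ)) * 2 ^ (2 * δ + 1) * π ^ (2 * δ - 1)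

/-!
Two steps of the functional equation move `Γ(-1-2δ)` to `Γ(1-2δ) / (2δ(1+2δ))`, and
`cos(π(1/2+δ)) = -sin(πδ)`. Hence for `δ > 0`,
`B(δ) = Γ(1-2δ) · sinc(πδ) / (1+2δ) · (2π)^{2δ}`, whose right-hand side is continuous at `0`
with value `1`: the pole of `Γ` at `-1` is cancelled by the zero of the cosine.
-/

theorem Real.Gamma_eq_Gamma_add_two_div {s : ℝ} (hs : s ≠ 0) (hs₁ : s + 1 ≠ 0) :
    Gamma s = Gamma (s + 2) / (s * (s + 1)) := by
  rw [show s + 2 = s + 1 + 1 by ring, Gamma_add_one hs₁, Gamma_add_one hs]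
  field_simp

theorem Real.continuousAt_Gamma_of_pos {s : ℝ} (hs : 0 < s) : ContinuousAt Gamma s :=
  (differentiableAt_Gamma fun m ↦ by linarith [(m.cast_nonneg : (0 : ℝ) ≤ m)]).continuousAt

theorem biasConst_eq {δ : ℝ} (hδ : δ ≠ 0) (hδ₁ : 1 + 2 * δ ≠ 0) :
    biasConst δ = Gamma (1 - 2 * δ) * sinc (π * δ) / (1 + 2 * δ) * (2 * π) ^ (2 * δ) := by
  have hΓ : Gamma (-1 - 2 * δ) = Gamma (1 - 2 * δ) / (2 * δ * (1 + 2 * δ)) := by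
    rw [Gamma_eq_Gamma_add_two_div (by contrapose! hδ₁; linarith) (by contrapose! hδ; linarith)]
    ring_nf
  have hcos : cos (π * (1 / 2 + δ)) = -sin (π * δ) := by
    rw [← cos_add_pi_div_two]
    ring_nf
  rw [biasConst, hΓ, hcos, sinc_of_ne_zero (mul_ne_zero pi_ne_zero hδ),
    mul_rpow zero_le_two pi_pos.le, rpow_add two_pos, rpow_sub pi_pos, rpow_one, rpow_one]
  field_simp

theorem continuousAt_zero_biasConst_closedForm :
    ContinuousAt
      (fun δ : ℝ ↦ Gamma (1 - 2 * δ) * sinc (π * δ) / (1 + 2 * δ) * (2 * π) ^ (2 * δ)) 0 := by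
  have hΓ : ContinuousAt (fun δ : ℝ ↦ Gamma (1 - 2 * δ)) 0 :=
    (continuousAt_Gamma_of_pos (by norm_num)).comp' (by fun_prop)
  fun_prop (disch := positivity)

theorem biasConst_tendsto_one :
    Tendsto biasConst (nhdsWithin 0 (Set.Ioi 0)) (nhds 1) := by
  have hlim := continuousAt_zero_biasConst_closedForm.tendsto.mono_left
    (nhdsWithin_le_nhds (s := Set.Ioi 0))
  simp only [mul_zero, sub_zero, Gamma_one, sinc_zero, add_zero, rpow_zero, mul_one,
    div_one] at hlim
  refine hlim.congr' ?_
  filter_upwards [self_mem_nhdsWithin] with δ (hδ : 0 < δ)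
  exact (biasConst_eq hδ.ne' (by positivity)).symm
end

section
/- The function B(δ) = -Γ(-1-2δ) cos(π(1/2+δ)) 2^{2δ+1} π^{2δ-1} is strictly positive and monotonically increasing on (0, 1/2), and is bounded away from zero on any interval [a, 1/2) with 0 < a < 1/2. -/
/-!
By the reflection formula `Γ(s) Γ(1 - s) = π / sin (π s)` at `s = 2δ + 2`, on `(0, 1/2)`
`B(δ) = (2π)^(2δ) / (Γ(2δ + 2) cos (π δ))`. Here `cos (π δ)` is positive and decreasing, and
`(2π)^x / Γ(x)` increases on `(0, 3]` because `log Γ` is convex with `log Γ(4) - log Γ(3) = log 3`,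
so its secant slopes left of `3` stay below `log 3 < log (2π)`.
-/

open Real Set

namespace Real

theorem strictAntiOn_log_Gamma_sub_mul_log {c : ℝ} (hc : 3 < c) :
    StrictAntiOn (fun x => log (Gamma x) - x * log c) (Ioc 0 3) := by
  have hconv : ConvexOn ℝ (Ioi 0) (fun x => log (Gamma x) - x * log c) :=
    convexOn_log_Gamma.sub (((LinearMap.id : ℝ →ₗ[ℝ] ℝ).smulRight (log c)).concaveOn (convex_Ioi 0))
  have hGamma_four : log (Gamma 4) = log 3 + log (Gamma 3) := by
    rw [show (4 : ℝ) = 3 + 1 by norm_num, Gamma_add_one (by norm_num),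
      log_mul (by norm_num) (Gamma_pos_of_pos (by norm_num)).ne']
  have hlog : log 3 < log c := log_lt_log (by norm_num) hc
  have hdrop : log (Gamma 4) - 4 * log c < log (Gamma 3) - 3 * log c := by
    rw [hGamma_four]; linarith
  simpa [Ioi_inter_Iic] using
    hconv.strictAntiOn (by norm_num : (4 : ℝ) ∈ Ioi 0) (by norm_num) hdrop

theorem rpow_div_Gamma_eq_exp {c x : ℝ} (hc : 0 < c) (hx : 0 < x) :
    c ^ x / Gamma x = exp (-(log (Gamma x) - x * log c)) := by
  rw [neg_sub, exp_sub, exp_log (Gamma_pos_of_pos hx), rpow_def_of_pos hc, mul_comm]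

theorem strictMonoOn_rpow_div_Gamma {c : ℝ} (hc : 3 < c) :
    StrictMonoOn (fun x => c ^ x / Gamma x) (Ioc 0 3) := by
  intro x hx y hy hxy
  simp only [rpow_div_Gamma_eq_exp (by linarith : 0 < c), hx.1, hy.1]
  exact exp_lt_exp.mpr (neg_lt_neg (strictAntiOn_log_Gamma_sub_mul_log hc hx hy hxy))

end Real

section BiasConst

variable {δ η : ℝ}

theorem cos_pi_mul_pos (hδ : δ ∈ Ioo (0 : ℝ) (1/2)) : 0 < cos (π * δ) :=
  cos_pos_of_mem_Ioo ⟨by nlinarith [pi_pos, hδ.1], by nlinarith [pi_pos, hδ.2]⟩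

theorem biasConst_eq_rpow_div_Gamma_div_cos (hδ : δ ∈ Ioo (0 : ℝ) (1/2)) :
    biasConst δ = (2 * π) ^ (2 * δ) / Gamma (2 * δ + 2) / cos (π * δ) := by
  have hsin : 0 < sin (π * δ) :=
    sin_pos_of_pos_of_lt_pi (mul_pos pi_pos hδ.1) (by nlinarith [pi_pos, hδ.2])
  have hcos := cos_pi_mul_pos hδ
  have hGamma : 0 < Gamma (2 * δ + 2) := Gamma_pos_of_pos (by linarith [hδ.1])
  have hreflect : Gamma (2 * δ + 2) * Gamma (-1 - 2 * δ) = π / (2 * sin (π * δ) * cos (π * δ)) := by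
    rw [show -1 - 2 * δ = 1 - (2 * δ + 2) by ring, Gamma_mul_Gamma_one_sub, ← sin_two_mul,
      show π * (2 * δ + 2) = 2 * (π * δ) + 2 * π by ring, sin_add_two_pi]
  have hshift : cos (π * (1/2 + δ)) = -sin (π * δ) := by
    rw [show π * (1/2 + δ) = π * δ + π / 2 by ring, cos_add_pi_div_two]
  have hGamma_neg : Gamma (-1 - 2 * δ) = π / (2 * sin (π * δ) * cos (π * δ) * Gamma (2 * δ + 2)) := by
    rw [← div_div, eq_div_iff hGamma.ne', mul_comm, hreflect]
  rw [biasConst, hGamma_neg, hshift, rpow_add two_pos, rpow_sub pi_pos, mul_rpow two_pos.le pi_pos.le,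
    rpow_one, rpow_one]
  field_simp

theorem biasConst_pos (hδ : δ ∈ Ioo (0 : ℝ) (1/2)) : 0 < biasConst δ := by
  have hcos := cos_pi_mul_pos hδ
  have hGamma : 0 < Gamma (2 * δ + 2) := Gamma_pos_of_pos (by linarith [hδ.1])
  rw [biasConst_eq_rpow_div_Gamma_div_cos hδ]
  positivity

theorem strictMonoOn_two_pi_rpow_div_Gamma :
    StrictMonoOn (fun δ => (2 * π) ^ (2 * δ) / Gamma (2 * δ + 2)) (Ioo 0 (1/2)) := by
  have hfactor : ∀ δ : ℝ, (2 * π) ^ (2 * δ) / Gamma (2 * δ + 2) =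
      (2 * π) ^ (2 * δ + 2) / Gamma (2 * δ + 2) / (2 * π) ^ (2 : ℝ) := fun δ => by
    rw [rpow_add (by positivity)]; field_simp
  intro δ hδ η hη hδη
  simp only [hfactor]
  gcongr ?_ / _
  exact strictMonoOn_rpow_div_Gamma (by linarith [pi_gt_three])
    ⟨by linarith [hδ.1], by linarith [hδ.2]⟩ ⟨by linarith [hη.1], by linarith [hη.2]⟩
    (by linarith)

theorem biasConst_strictMonoOn : StrictMonoOn biasConst (Ioo 0 (1/2)) := by
  intro δ hδ η hη hδη
  have hcos : cos (π * η) ≤ cos (π * δ) :=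
    (strictAntiOn_cos ⟨by nlinarith [pi_pos, hδ.1], by nlinarith [pi_pos, hδ.2]⟩
      ⟨by nlinarith [pi_pos, hη.1], by nlinarith [pi_pos, hη.2]⟩ (by gcongr)).le
  rw [biasConst_eq_rpow_div_Gamma_div_cos hδ, biasConst_eq_rpow_div_Gamma_div_cos hη]
  exact div_lt_div₀ (strictMonoOn_two_pi_rpow_div_Gamma hδ hη hδη) hcos
    (by have := Gamma_pos_of_pos (by linarith [hη.1] : 0 < 2 * η + 2); positivity)
    (cos_pi_mul_pos hη)

end BiasConst

theorem biasConst_pos_strictMono_bddBelow :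
    (∀ δ ∈ Ioo (0:ℝ) (1/2), 0 < biasConst δ) ∧
    StrictMonoOn biasConst (Ioo (0:ℝ) (1/2)) ∧
    (∀ a : ℝ, 0 < a → a < 1/2 → ∃ c : ℝ, 0 < c ∧ ∀ δ ∈ Ico a (1/2:ℝ), c ≤ biasConst δ) := by
  refine ⟨fun δ hδ => biasConst_pos hδ, biasConst_strictMonoOn, fun a ha ha' => ?_⟩
  refine ⟨biasConst a, biasConst_pos ⟨ha, ha'⟩, fun δ hδ => ?_⟩
  exact biasConst_strictMonoOn.monotoneOn ⟨ha, ha'⟩ ⟨ha.trans_le hδ.1, hδ.2⟩ hδ.1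
end

section
/- The improper integral ∫_{-∞}^∞ [ (sin s - s cos s)² / s⁴ ] ds equals π/3. Equivalently, 2π ∫_{-∞}^∞ (sin s - s cos s)²/s⁴ ds = 2π²/3. -/
/-!
With `g y = y · 1_{[-1,1]}(y)` and `c = 2πξ`, one has `|𝓕 g ξ| = 2 |sin c - c cos c| / c²`, so
the integrand is `|𝓕 g|² / 4` after rescaling. Instead of Plancherel we use Fourier inversion at `0`
for the autocorrelation `k x = ∫ g y * g (x + y) dy`, the explicit even cubic spline
`cubicKernel`: its Fourier transform is `4 (sin c - c cos c)² / c⁴` and `k 0 = ∫ g² = 2/3`,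
whence `(4 / 2π) ∫ (sin s - s cos s)² / s⁴ ds = 2/3`.
-/

open Real MeasureTheory FourierTransform Set

lemma sq_sin_sub_mul_cos_le_pow_six (s : ℝ) : (sin s - s * cos s) ^ 2 ≤ s ^ 6 / 4 := by
  wlog hs : 0 < s generalizing s
  · rcases (not_lt.mp hs).eq_or_lt with rfl | hneg
    · simp
    have := this (-s) (neg_pos.mpr hneg)
    rwa [sin_neg, cos_neg, neg_mul, sub_neg_eq_add, neg_add_eq_sub, ← neg_sub, neg_sq,
      Even.neg_pow (by decide)] at this
  have lower : s - s ^ 3 / 6 < sin s := sin_gt_sub_cube hs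
  have upper : 1 - s ^ 2 / 2 ≤ cos s := one_sub_sq_div_two_le_cos
  have h_ge : -(s ^ 3 / 2) ≤ sin s - s * cos s := by nlinarith [cos_le_one s, pow_pos hs 3]
  have h_le : sin s - s * cos s ≤ s ^ 3 / 2 := by nlinarith [sin_le hs.le]
  nlinarith

lemma sq_sin_sub_mul_cos_le (s : ℝ) : (sin s - s * cos s) ^ 2 ≤ 2 * (1 + s ^ 2) := by
  nlinarith [sq_nonneg (sin s + s * cos s), sin_sq_le_one s,
    mul_le_mul_of_nonneg_left (cos_sq_le_one s) (sq_nonneg s)]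

lemma sin_sub_mul_cos_sq_div_pow_four_le (s : ℝ) :
    (sin s - s * cos s) ^ 2 / s ^ 4 ≤ 8 / (1 + s ^ 2) := by
  rcases eq_or_ne s 0 with rfl | hs
  · norm_num
  rw [div_le_div_iff₀ (by positivity) (by positivity)]
  rcases le_total (s ^ 2) 1 with hsmall | hlarge
  · nlinarith [sq_sin_sub_mul_cos_le_pow_six s, pow_pos (sq_pos_of_ne_zero hs) 2]
  · nlinarith [sq_sin_sub_mul_cos_le s]

lemma integrable_sin_sub_mul_cos_sq_div_pow_four :
    Integrable (fun s : ℝ => (sin s - s * cos s) ^ 2 / s ^ 4) := by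
  refine (integrable_inv_one_add_sq.const_mul 8).mono' (Measurable.aestronglyMeasurable
    (by fun_prop)) (ae_of_all _ fun s => ?_)
  rw [norm_of_nonneg (by positivity)]
  exact (sin_sub_mul_cos_sq_div_pow_four_le s).trans_eq (div_eq_mul_inv _ _)

lemma MeasureTheory.Integrable.integral_fourier_eq {V E : Type*} [NormedAddCommGroup V]
    [InnerProductSpace ℝ V] [MeasurableSpace V] [BorelSpace V] [FiniteDimensional ℝ V]
    [NormedAddCommGroup E] [NormedSpace ℂ E] [CompleteSpace E] {f : V → E}
    (hf : Integrable f) (hFf : Integrable (𝓕 f)) (h0 : ContinuousAt f 0) :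
    ∫ ξ, 𝓕 f ξ = f 0 := by
  simpa [Real.fourierInv_eq] using hf.fourierInv_fourier_eq hFf h0

lemma Real.fourier_ofReal_eq_integral_mul_cos {f : ℝ → ℝ} (hf : Integrable f)
    (heven : ∀ x, f (-x) = f x) (ξ : ℝ) :
    𝓕 (fun x => (f x : ℂ)) ξ = ((∫ x, f x * cos (2 * π * ξ * x) : ℝ) : ℂ) := by
  rw [Real.fourier_real_eq_integral_exp_smul]
  have hg : Integrable fun v : ℝ => Complex.exp (↑(-2 * π * v * ξ) * Complex.I) • (f v : ℂ) :=
    hf.ofReal.bdd_mul (c := 1) (by fun_prop) (ae_of_all _ fun v => by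
      rw [Complex.norm_exp_ofReal_mul_I])
  apply Complex.ext
  · rw [← RCLike.re_to_complex, ← integral_re hg]
    simp only [RCLike.re_to_complex, smul_eq_mul, Complex.re_mul_ofReal,
      Complex.exp_ofReal_mul_I_re, Complex.ofReal_re]
    congr 1 with v
    rw [← cos_neg]
    ring_nf
  · rw [← RCLike.im_to_complex, ← integral_im hg]
    simp only [RCLike.im_to_complex, smul_eq_mul, Complex.im_mul_ofReal,
      Complex.exp_ofReal_mul_I_im, Complex.ofReal_im]
    have hodd : ∫ v, sin (-2 * π * v * ξ) * f v = -∫ v, sin (-2 * π * v * ξ) * f v := by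
      rw [← integral_neg, ← integral_neg_eq_self]
      simp only [heven, mul_neg, neg_mul, sin_neg, neg_neg]
    linarith

lemma hasDerivAt_primitive_cubic_mul_cos {c : ℝ} (hc : c ≠ 0) (x : ℝ) :
    HasDerivAt (fun x : ℝ => (x ^ 3 - 6 * x + 4) * sin (c * x) / c
        + (3 * x ^ 2 - 6) * cos (c * x) / c ^ 2 - 6 * x * sin (c * x) / c ^ 3
        - 6 * cos (c * x) / c ^ 4)
      ((x ^ 3 - 6 * x + 4) * cos (c * x)) x := by
  have hlin : HasDerivAt (fun x : ℝ => c * x) c x := by simpa using (hasDerivAt_id x).const_mul c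
  have hsin := hlin.sin
  have hcos := hlin.cos
  have hp1 : HasDerivAt (fun x : ℝ => x ^ 3 - 6 * x + 4) (3 * x ^ 2 - 6) x := by
    simpa using ((hasDerivAt_pow 3 x).sub ((hasDerivAt_id x).const_mul 6)).add_const 4
  have hp2 : HasDerivAt (fun x : ℝ => 3 * x ^ 2 - 6) (6 * x) x := by
    refine (((hasDerivAt_pow 2 x).const_mul 3).sub_const 6).congr_deriv ?_
    norm_num
    ring
  have hp3 : HasDerivAt (fun x : ℝ => 6 * x) 6 x := by simpa using (hasDerivAt_id x).const_mul 6
  refine ((((hp1.mul hsin).div_const c).add ((hp2.mul hcos).div_const (c ^ 2))).sub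
      ((hp3.mul hsin).div_const (c ^ 3)) |>.sub
      ((hcos.const_mul 6).div_const (c ^ 4))).congr_deriv ?_
  field_simp
  ring

/-- At `c = 0` both sides vanish, the right-hand one through `0 / 0 = 0`. -/
lemma integral_cubic_mul_cos (c : ℝ) :
    ∫ x in (0 : ℝ)..2, (x ^ 3 - 6 * x + 4) * cos (c * x) =
      12 * ((sin c - c * cos c) ^ 2 / c ^ 4) := by
  rcases eq_or_ne c 0 with rfl | hc
  · simp only [zero_mul, cos_zero, mul_one, sin_zero, sub_zero, ne_eq, OfNat.ofNat_ne_zero,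
      not_false_eq_true, zero_pow, div_zero, mul_zero]
    rw [intervalIntegral.integral_add (Continuous.intervalIntegrable (by fun_prop) _ _)
      intervalIntegrable_const, intervalIntegral.integral_sub
      (Continuous.intervalIntegrable (by fun_prop) _ _)
      (Continuous.intervalIntegrable (by fun_prop) _ _), intervalIntegral.integral_const_mul]
    norm_num [integral_pow]
  rw [intervalIntegral.integral_eq_sub_of_hasDerivAt
    (fun x _ => hasDerivAt_primitive_cubic_mul_cos hc x)
    (Continuous.intervalIntegrable (by fun_prop) _ _)]
  simp only [mul_zero, sin_zero, cos_zero, mul_comm c 2, sin_two_mul, cos_two_mul]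
  field_simp
  linear_combination (-12) * sin_sq_add_cos_sq c

noncomputable def cubicKernel (x : ℝ) : ℝ :=
  if |x| ≤ 2 then (|x| ^ 3 - 6 * |x| + 4) / 6 else 0

lemma continuous_cubicKernel : Continuous cubicKernel :=
  Continuous.if_le (by fun_prop) continuous_const continuous_abs continuous_const
    fun x hx => by norm_num [hx]

lemma cubicKernel_eq_zero_of_notMem {x : ℝ} (hx : x ∉ Ioo (-2) 2) : cubicKernel x = 0 := by
  rw [cubicKernel]
  split_ifs with h
  · rw [le_antisymm h (not_lt.mp fun h' => hx (abs_lt.mp h'))]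
    norm_num
  · rfl

lemma hasCompactSupport_cubicKernel : HasCompactSupport cubicKernel :=
  HasCompactSupport.intro isCompact_Icc fun _ hx => cubicKernel_eq_zero_of_notMem fun h =>
    hx (Ioo_subset_Icc_self h)

lemma integrable_cubicKernel : Integrable cubicKernel :=
  continuous_cubicKernel.integrable_of_hasCompactSupport hasCompactSupport_cubicKernel

lemma cubicKernel_neg (x : ℝ) : cubicKernel (-x) = cubicKernel x := by
  simp only [cubicKernel, abs_neg]

lemma cubicKernel_zero : cubicKernel 0 = 2 / 3 := by norm_num [cubicKernel]

lemma integral_cubicKernel_mul {g : ℝ → ℝ} (hg : Continuous g) :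
    ∫ x, cubicKernel x * g x = ∫ x in 0..2, (x ^ 3 - 6 * x + 4) / 6 * (g x + g (-x)) := by
  have hcont : Continuous fun x => cubicKernel x * g x := continuous_cubicKernel.mul hg
  have hneg : Continuous fun x => cubicKernel (-x) * g (-x) := hcont.comp continuous_neg
  have hsupp : Function.support (fun x => cubicKernel x * g x) ⊆ Ioc (-2) 2 := fun x hx =>
    Ioo_subset_Ioc_self (not_not.mp fun h => hx (by simp [cubicKernel_eq_zero_of_notMem h]))
  rw [← intervalIntegral.integral_eq_integral_of_support_subset hsupp,
    ← intervalIntegral.integral_add_adjacent_intervals (b := 0) (hcont.intervalIntegrable _ _)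
      (hcont.intervalIntegrable _ _), add_comm, ← neg_zero,
    ← intervalIntegral.integral_comp_neg, neg_zero, ← intervalIntegral.integral_add
      (hcont.intervalIntegrable _ _) (hneg.intervalIntegrable _ _)]
  refine intervalIntegral.integral_congr fun x hx => ?_
  rw [uIcc_of_le zero_le_two] at hx
  rw [cubicKernel_neg]
  simp only [cubicKernel, abs_of_nonneg hx.1, if_pos hx.2]
  ring

lemma integral_cubicKernel_mul_cos (c : ℝ) :
    ∫ x, cubicKernel x * cos (c * x) = 4 * ((sin c - c * cos c) ^ 2 / c ^ 4) := by
  have hcos (x : ℝ) : (x ^ 3 - 6 * x + 4) / 6 * (cos (c * x) + cos (c * -x)) =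
      3⁻¹ * ((x ^ 3 - 6 * x + 4) * cos (c * x)) := by
    rw [mul_neg, cos_neg]
    ring
  rw [integral_cubicKernel_mul (by fun_prop)]
  simp only [hcos, intervalIntegral.integral_const_mul, integral_cubic_mul_cos]
  ring

lemma fourier_cubicKernel (ξ : ℝ) :
    𝓕 (fun x => (cubicKernel x : ℂ)) ξ =
      ((4 * ((sin (2 * π * ξ) - 2 * π * ξ * cos (2 * π * ξ)) ^ 2 / (2 * π * ξ) ^ 4) : ℝ) : ℂ) := by
  rw [Real.fourier_ofReal_eq_integral_mul_cos integrable_cubicKernel cubicKernel_neg,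
    integral_cubicKernel_mul_cos]

lemma integral_sin_sub_mul_cos_sq_div_pow_four_comp_two_pi_mul :
    ∫ ξ : ℝ, 4 * ((sin (2 * π * ξ) - 2 * π * ξ * cos (2 * π * ξ)) ^ 2 / (2 * π * ξ) ^ 4) =
      2 / 3 := by
  have hFk : Integrable (𝓕 fun x => (cubicKernel x : ℂ)) := by
    rw [funext fourier_cubicKernel]
    exact ((integrable_sin_sub_mul_cos_sq_div_pow_four.comp_mul_left' (by positivity)).const_mul
      4).ofReal
  have hinv := integrable_cubicKernel.ofReal.integral_fourier_eq hFk
    (Complex.continuous_ofReal.comp continuous_cubicKernel).continuousAt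
  simp only [fourier_cubicKernel] at hinv
  rw [integral_complex_ofReal, cubicKernel_zero] at hinv
  exact_mod_cast hinv

theorem integral_sin_sub_mul_cos_sq_div_pow_four :
    Integrable (fun s : ℝ => (Real.sin s - s * Real.cos s) ^ 2 / s ^ 4) volume ∧
    (∫ s : ℝ, (Real.sin s - s * Real.cos s) ^ 2 / s ^ 4) = π / 3 ∧
    2 * π * ∫ s : ℝ, (Real.sin s - s * Real.cos s) ^ 2 / s ^ 4 = 2 * π ^ 2 / 3 := by
  have hval : ∫ s : ℝ, (sin s - s * cos s) ^ 2 / s ^ 4 = π / 3 := by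
    have h := integral_sin_sub_mul_cos_sq_div_pow_four_comp_two_pi_mul
    rw [integral_const_mul, Measure.integral_comp_mul_left
      (fun s => (sin s - s * cos s) ^ 2 / s ^ 4), abs_of_pos (by positivity), smul_eq_mul] at h
    field_simp at h
    linarith
  exact ⟨integrable_sin_sub_mul_cos_sq_div_pow_four, hval, by rw [hval]; ring⟩
end
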